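/- Let S and R be symmetric positive definite m×m real matrices. Then for every vector x ∈ ℝ^m, xᵀ (S^{−1/2} (S^{1/2} R^{−1} S^{1/2})^{1/2} S^{−1/2}) x ≤ (xᵀ S^{−1} x)^{1/2} · (xᵀ R^{−1} x)^{1/2}. -/

import Mathlib

/-!
Write `P = S^{1/2}` and `B = (P R⁻¹ P)^{1/2}`, and substitute `y = P⁻¹ x`. Since
`S⁻¹ = P⁻¹ P⁻¹` and `R⁻¹ = P⁻¹ B² P⁻¹`, the three quadratic forms become `y ⬝ B y`, `y ⬝ y` and
`y ⬝ B² y = ‖B y‖²`, so the inequality is Cauchy–Schwarz for `y` and `B y`.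
-/

open Matrix Real
open scoped Classical

/-- The unique symmetric positive semidefinite square root of a positive semidefinite
matrix (junk value `0` if the matrix is not positive semidefinite). -/
noncomputable def psqrt {m : ℕ} (M : Matrix (Fin m) (Fin m) ℝ) : Matrix (Fin m) (Fin m) ℝ :=
  if h : M.PosSemidef then
    h.1.eigenvectorUnitary.1 * diagonal ((↑) ∘ (√·) ∘ h.1.eigenvalues) *
      (star h.1.eigenvectorUnitary : Matrix (Fin m) (Fin m) ℝ)
  else 0

/-- The geometric mean `S # R = S^{1/2} (S^{-1/2} R S^{-1/2})^{1/2} S^{1/2}` of two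
positive definite matrices: the midpoint of the geodesic joining them in the
affine-invariant Riemannian metric. -/
noncomputable def geoMean {m : ℕ} (S R : Matrix (Fin m) (Fin m) ℝ) :
    Matrix (Fin m) (Fin m) ℝ :=
  psqrt S * psqrt ((psqrt S)⁻¹ * R * (psqrt S)⁻¹) * psqrt S

section psqrt

variable {m : ℕ} {M : Matrix (Fin m) (Fin m) ℝ}

theorem psqrt_posSemidef (h : M.PosSemidef) : (psqrt M).PosSemidef := by
  rw [psqrt, dif_pos h]
  simpa [Unitary.coe_star, star_eq_conjTranspose, Function.comp_def] using
    (posSemidef_diagonal_iff.mpr fun i ↦ sqrt_nonneg (h.1.eigenvalues i)).mul_mul_conjTranspose_same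
      (h.1.eigenvectorUnitary : Matrix (Fin m) (Fin m) ℝ)

theorem psqrt_mul_self (h : M.PosSemidef) : psqrt M * psqrt M = M := by
  set U : Matrix (Fin m) (Fin m) ℝ := h.1.eigenvectorUnitary.1
  set D : Matrix (Fin m) (Fin m) ℝ := diagonal ((↑) ∘ (√·) ∘ h.1.eigenvalues)
  have hUU : star U * U = 1 := Unitary.coe_star_mul_self _
  have hDD : D * D = diagonal (RCLike.ofReal ∘ h.1.eigenvalues) := by
    rw [diagonal_mul_diagonal]
    congr 1
    funext i
    simp [mul_self_sqrt (h.eigenvalues_nonneg i)]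
  calc psqrt M * psqrt M = U * D * star U * (U * D * star U) := by rw [psqrt, dif_pos h]
    _ = U * (D * (star U * U) * D) * star U := by simp only [Matrix.mul_assoc]
    _ = M := by
      rw [hUU, Matrix.mul_one, hDD]
      conv_rhs => rw [h.1.spectral_theorem, Unitary.conjStarAlgAut_apply]

theorem psqrt_transpose (h : M.PosSemidef) : (psqrt M)ᵀ = psqrt M := by
  simpa using (psqrt_posSemidef h).1.eq

theorem isUnit_det_psqrt (h : M.PosDef) : IsUnit (psqrt M).det := by
  have hdet : (psqrt M).det * (psqrt M).det = M.det := by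
    rw [← det_mul, psqrt_mul_self h.posSemidef]
  exact isUnit_of_mul_isUnit_left (hdet ▸ h.det_pos.ne'.isUnit)

end psqrt

section quadraticForm

variable {n : Type*} [Fintype n]

theorem dotProduct_le_sqrt_mul_sqrt (y z : n → ℝ) :
    y ⬝ᵥ z ≤ √(y ⬝ᵥ y) * √(z ⬝ᵥ z) := by
  simpa only [dotProduct, sq] using Real.sum_mul_le_sqrt_mul_sqrt Finset.univ y z

theorem dotProduct_mulVec_conj {R : Type*} [CommRing R] {Q : Matrix n n R} (hQ : Qᵀ = Q)
    (N : Matrix n n R) (x : n → R) :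
    x ⬝ᵥ ((Q * N * Q) *ᵥ x) = (Q *ᵥ x) ⬝ᵥ (N *ᵥ (Q *ᵥ x)) := by
  rw [← mulVec_mulVec, ← mulVec_mulVec, dotProduct_mulVec x Q]
  congr 1
  rw [← vecMul_transpose, hQ]

theorem dotProduct_mulVec_mul_self {R : Type*} [CommRing R] {Q : Matrix n n R} (hQ : Qᵀ = Q)
    (x : n → R) : x ⬝ᵥ ((Q * Q) *ᵥ x) = (Q *ᵥ x) ⬝ᵥ (Q *ᵥ x) := by
  simpa using dotProduct_mulVec_conj hQ 1 x

theorem dotProduct_mulVec_conj_le {P B : Matrix n n ℝ} (hP : Pᵀ = P)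
    (hB : Bᵀ = B) (x : n → ℝ) :
    x ⬝ᵥ ((P * B * P) *ᵥ x) ≤
      √(x ⬝ᵥ ((P * P) *ᵥ x)) * √(x ⬝ᵥ ((P * (B * B) * P) *ᵥ x)) := by
  rw [dotProduct_mulVec_conj hP, dotProduct_mulVec_conj hP, dotProduct_mulVec_mul_self hP,
    dotProduct_mulVec_mul_self hB]
  exact dotProduct_le_sqrt_mul_sqrt _ _

end quadraticForm

/-- for positive definite `S, R` and any vector `x`,
`xᵀ (S^{-1/2} (S^{1/2} R^{-1} S^{1/2})^{1/2} S^{-1/2}) x ≤ (xᵀ S⁻¹ x)^{1/2} (xᵀ R⁻¹ x)^{1/2}`. -/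
theorem geometric_mean_quadratic_form_bound {m : ℕ}
    (S R : Matrix (Fin m) (Fin m) ℝ) (hS : S.PosDef) (hR : R.PosDef)
    (x : Fin m → ℝ) :
    x ⬝ᵥ (((psqrt S)⁻¹ * psqrt (psqrt S * R⁻¹ * psqrt S) * (psqrt S)⁻¹) *ᵥ x)
      ≤ Real.sqrt (x ⬝ᵥ (S⁻¹ *ᵥ x)) * Real.sqrt (x ⬝ᵥ (R⁻¹ *ᵥ x)) := by
  set P := psqrt S
  have hP : Pᵀ = P := psqrt_transpose hS.posSemidef
  have hPinv : P⁻¹ᵀ = P⁻¹ := by rw [transpose_nonsing_inv, hP]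
  have hA : (P * R⁻¹ * P).PosSemidef := by
    simpa [hP] using hR.inv.posSemidef.mul_mul_conjTranspose_same P
  set B := psqrt (P * R⁻¹ * P)
  have hS_inv : S⁻¹ = P⁻¹ * P⁻¹ := by
    rw [← psqrt_mul_self hS.posSemidef, Matrix.mul_inv_rev]
  have hR_inv : R⁻¹ = P⁻¹ * (B * B) * P⁻¹ := by
    have hPunit := isUnit_det_psqrt hS
    rw [psqrt_mul_self hA, Matrix.mul_assoc, Matrix.mul_assoc, Matrix.mul_nonsing_inv _ hPunit,
      ← Matrix.mul_assoc, ← Matrix.mul_assoc, Matrix.nonsing_inv_mul _ hPunit, Matrix.one_mul,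
      Matrix.mul_one]
  rw [hS_inv, hR_inv]
  exact dotProduct_mulVec_conj_le hPinv (psqrt_transpose hA) x
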